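/- arXiv:1603.09601 — 6 statements merged into one kernel-verified Lean document; each statement's English description precedes it below -/
import Mathlib

section
/- For nonnegative channel gains g_1,…,g_M ≥ 0, the SNR function γ(p) = (∑_{m=1}^M √(g_m p_m))² is jointly concave in p on the positive orthant. -/
/-- The SNR function `γ(p) = (∑ m, √(g_m p_m))²` with nonnegative gains `g_m`
is jointly concave in `p` on the positive orthant. -/
theorem snr_concaveOn (M : ℕ) (g : Fin M → ℝ) (hg : ∀ m, 0 ≤ g m) :
    ConcaveOn ℝ {p : Fin M → ℝ | ∀ m, 0 < p m}
      (fun p => (∑ m, Real.sqrt (g m * p m)) ^ 2) := by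
  have hconv : Convex ℝ {p : Fin M → ℝ | ∀ m, 0 < p m} := by
    have h : {p : Fin M → ℝ | ∀ m, 0 < p m}
        = Set.pi Set.univ (fun _ : Fin M => Set.Ioi (0:ℝ)) := by
      ext p; simp [Set.mem_pi]
    rw [h]; exact convex_pi fun i _ => convex_Ioi 0
  refine ⟨hconv, ?_⟩
  intro p hp q hq t s ht hs hts
  set a : Fin M → ℝ := fun m => Real.sqrt (g m * p m) with ha_def
  set b : Fin M → ℝ := fun m => Real.sqrt (g m * q m) with hb_def
  have ha : ∀ m, 0 ≤ a m := fun m => Real.sqrt_nonneg _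
  have hb : ∀ m, 0 ≤ b m := fun m => Real.sqrt_nonneg _
  set v : Fin M → EuclideanSpace ℝ (Fin 2) :=
    fun m => !₂[Real.sqrt t * a m, Real.sqrt s * b m] with hv_def
  have hnorm : ∀ m, ‖v m‖ = Real.sqrt (t * a m ^ 2 + s * b m ^ 2) := by
    intro m
    rw [EuclideanSpace.norm_eq]
    congr 1
    simp [hv_def, Fin.sum_univ_two, mul_pow, Real.sq_sqrt ht, Real.sq_sqrt hs]
  have key1 : ∀ m, Real.sqrt (g m * (t • p + s • q) m) = ‖v m‖ := by
    intro m
    rw [hnorm m]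
    congr 1
    have hap : a m ^ 2 = g m * p m :=
      Real.sq_sqrt (mul_nonneg (hg m) (hp m).le)
    have hbq : b m ^ 2 = g m * q m :=
      Real.sq_sqrt (mul_nonneg (hg m) (hq m).le)
    simp only [Pi.add_apply, Pi.smul_apply, smul_eq_mul, hap, hbq]
    ring
  have hsum : (∑ m, v m) = ![Real.sqrt t * ∑ m, a m, Real.sqrt s * ∑ m, b m] := by
    ext i
    rw [WithLp.ofLp_sum, Finset.sum_apply i Finset.univ (fun m => (v m).ofLp)]
    fin_cases i <;>
      simp [hv_def, Finset.mul_sum]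
  have key2 : ‖∑ m, v m‖
      = Real.sqrt (t * (∑ m, a m) ^ 2 + s * (∑ m, b m) ^ 2) := by
    rw [EuclideanSpace.norm_eq, hsum]
    congr 1
    simp [Fin.sum_univ_two, mul_pow, Real.sq_sqrt ht, Real.sq_sqrt hs]
  have tri : ‖∑ m, v m‖ ≤ ∑ m, ‖v m‖ := norm_sum_le _ _
  have hRHSnn : 0 ≤ t * (∑ m, a m) ^ 2 + s * (∑ m, b m) ^ 2 := by positivity
  calc t • (∑ m, Real.sqrt (g m * p m)) ^ 2
        + s • (∑ m, Real.sqrt (g m * q m)) ^ 2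
      = t * (∑ m, a m) ^ 2 + s * (∑ m, b m) ^ 2 := by
        simp [smul_eq_mul, ha_def, hb_def]
    _ = Real.sqrt (t * (∑ m, a m) ^ 2 + s * (∑ m, b m) ^ 2) ^ 2 :=
        (Real.sq_sqrt hRHSnn).symm
    _ = ‖∑ m, v m‖ ^ 2 := by rw [key2]
    _ ≤ (∑ m, ‖v m‖) ^ 2 := by
        apply pow_le_pow_left₀ (norm_nonneg _) tri
    _ = (∑ m, Real.sqrt (g m * (t • p + s • q) m)) ^ 2 := by
        simp_rw [key1]
end

section
/- For nonnegative channel gains g_1,…,g_M, the rate function r(p) = c·log(1 + (∑_{m=1}^M √(g_m p_m))²) with c > 0 is jointly concave in p on the positive orthant. -/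
/-- The rate `r(p) = c·log(1 + (∑ m, √(g_m p_m))²)` with `c > 0` and `g_m ≥ 0`
is jointly concave in `p` on the positive orthant. -/
theorem rate_concaveOn (M : ℕ) (g : Fin M → ℝ) (hg : ∀ m, 0 ≤ g m)
    (c : ℝ) (hc : 0 < c) :
    ConcaveOn ℝ {p : Fin M → ℝ | ∀ m, 0 < p m}
      (fun p => c * Real.log (1 + (∑ m, Real.sqrt (g m * p m)) ^ 2)) := by
  set S : (Fin M → ℝ) → ℝ := fun p => ∑ m, Real.sqrt (g m * p m) with hS
  have hSnn : ∀ p, 0 ≤ S p := fun p => Finset.sum_nonneg fun m _ => Real.sqrt_nonneg _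
  have hconv : Convex ℝ {p : Fin M → ℝ | ∀ m, 0 < p m} := by
    have h : {p : Fin M → ℝ | ∀ m, 0 < p m} = Set.univ.pi (fun _ => Set.Ioi (0:ℝ)) := by
      ext p; simp [Set.mem_pi]
    rw [h]
    exact convex_pi fun i _ => convex_Ioi 0
  refine ⟨hconv, ?_⟩
  intro p hp q hq t s ht hs hts
  have key : t * (S p)^2 + s * (S q)^2 ≤ (S (t • p + s • q))^2 := by
    set u : Fin M → ℝ := fun m => Real.sqrt (t * (g m * p m)) with hu
    set v : Fin M → ℝ := fun m => Real.sqrt (s * (g m * q m)) with hv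
    have hun : ∀ m, 0 ≤ t * (g m * p m) :=
      fun m => mul_nonneg ht (mul_nonneg (hg m) (hp m).le)
    have hvn : ∀ m, 0 ≤ s * (g m * q m) :=
      fun m => mul_nonneg hs (mul_nonneg (hg m) (hq m).le)
    have hterm : ∀ m, Real.sqrt (g m * ((t • p + s • q) m)) = ‖(⟨u m, v m⟩ : ℂ)‖ := by
      intro m
      have h1 : g m * ((t • p + s • q) m) = u m * u m + v m * v m := by
        have hu2 : u m * u m = t * (g m * p m) := Real.mul_self_sqrt (hun m)
        have hv2 : v m * v m = s * (g m * q m) := Real.mul_self_sqrt (hvn m)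
        simp only [Pi.add_apply, Pi.smul_apply, smul_eq_mul, hu2, hv2]
        ring
      rw [h1, Complex.norm_def, Complex.normSq_mk]
    have hsum : S (t • p + s • q) = ∑ m, ‖(⟨u m, v m⟩ : ℂ)‖ := by
      simp only [hS]
      exact Finset.sum_congr rfl fun m _ => hterm m
    have htri : ‖∑ m, (⟨u m, v m⟩ : ℂ)‖ ≤ ∑ m, ‖(⟨u m, v m⟩ : ℂ)‖ :=
      norm_sum_le _ _
    have hzsum : (∑ m, (⟨u m, v m⟩ : ℂ)) = ⟨∑ m, u m, ∑ m, v m⟩ := by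
      apply Complex.ext <;> simp [Complex.re_sum, Complex.im_sum]
    have habs : ‖(⟨∑ m, u m, ∑ m, v m⟩ : ℂ)‖
        = Real.sqrt ((∑ m, u m)^2 + (∑ m, v m)^2) := by
      rw [Complex.norm_def, Complex.normSq_mk]; ring_nf
    have h2 : Real.sqrt ((∑ m, u m)^2 + (∑ m, v m)^2) ≤ S (t • p + s • q) := by
      rw [hsum, ← habs, ← hzsum]; exact htri
    have h3 : (∑ m, u m)^2 + (∑ m, v m)^2 ≤ (S (t • p + s • q))^2 := by
      have hx : 0 ≤ (∑ m, u m)^2 + (∑ m, v m)^2 := by positivity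
      calc (∑ m, u m)^2 + (∑ m, v m)^2
          = (Real.sqrt ((∑ m, u m)^2 + (∑ m, v m)^2))^2 := (Real.sq_sqrt hx).symm
        _ ≤ (S (t • p + s • q))^2 := pow_le_pow_left₀ (Real.sqrt_nonneg _) h2 2
    have hus : (∑ m, u m)^2 = t * (S p)^2 := by
      have : ∑ m, u m = Real.sqrt t * S p := by
        rw [hS, Finset.mul_sum]
        exact Finset.sum_congr rfl fun m _ => Real.sqrt_mul ht _
      rw [this, mul_pow, Real.sq_sqrt ht]
    have hvs : (∑ m, v m)^2 = s * (S q)^2 := by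
      have : ∑ m, v m = Real.sqrt s * S q := by
        rw [hS, Finset.mul_sum]
        exact Finset.sum_congr rfl fun m _ => Real.sqrt_mul hs _
      rw [this, mul_pow, Real.sq_sqrt hs]
    calc t * (S p)^2 + s * (S q)^2 = (∑ m, u m)^2 + (∑ m, v m)^2 := by rw [hus, hvs]
      _ ≤ _ := h3
  -- now the log step
  have hp2 : (0:ℝ) < 1 + (S p)^2 := by positivity
  have hq2 : (0:ℝ) < 1 + (S q)^2 := by positivity
  have hmid : (0:ℝ) < 1 + (t * (S p)^2 + s * (S q)^2) := by positivity
  have hlog1 : Real.log (1 + (t * (S p)^2 + s * (S q)^2))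
      ≤ Real.log (1 + (S (t • p + s • q))^2) :=
    Real.log_le_log hmid (by linarith)
  have hlog2 : t * Real.log (1 + (S p)^2) + s * Real.log (1 + (S q)^2)
      ≤ Real.log (1 + (t * (S p)^2 + s * (S q)^2)) := by
    have := (strictConcaveOn_log_Ioi.concaveOn).2 (Set.mem_Ioi.2 hp2) (Set.mem_Ioi.2 hq2)
      ht hs hts
    have heq : t • (1 + (S p)^2) + s • (1 + (S q)^2)
        = 1 + (t * (S p)^2 + s * (S q)^2) := by
      simp only [smul_eq_mul]; nlinarith [hts]
    rw [heq] at this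
    simpa [smul_eq_mul] using this
  simp only [smul_eq_mul]
  calc t * (c * Real.log (1 + (S p)^2)) + s * (c * Real.log (1 + (S q)^2))
      = c * (t * Real.log (1 + (S p)^2) + s * Real.log (1 + (S q)^2)) := by ring
    _ ≤ c * Real.log (1 + (S (t • p + s • q))^2) := by
        apply mul_le_mul_of_nonneg_left _ hc.le
        linarith
end

section
/- Let F(A) = ω − λ∑_{m∈A} 1/R_m and G(A) = ∑_{m∈A} g_m for subsets A of a finite set M, where ω ∈ ℝ, λ ≥ 0, R_m > 0, g_m ≥ 0. Then the set function A ↦ F(A)·G(A) is submodular, i.e., for all A ⊆ M and distinct i,j ∉ A: F(A∪{i})G(A∪{i}) − F(A)G(A) ≥ F(A∪{i,j})G(A∪{i,j}) − F(A∪{j})G(A∪{j}). -/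
/-- With `F(A) = ω − λ∑_{m∈A} 1/R_m` and `G(A) = ∑_{m∈A} g_m`, the set function
`A ↦ F(A)·G(A)` is submodular. -/
theorem FG_submodular {ι : Type*} [Fintype ι] [DecidableEq ι]
    (ω lam : ℝ) (hlam : 0 ≤ lam) (R g : ι → ℝ) (hR : ∀ m, 0 < R m) (hg : ∀ m, 0 ≤ g m)
    (F : Finset ι → ℝ) (hF : ∀ A, F A = ω - lam * ∑ m ∈ A, 1 / R m)
    (G : Finset ι → ℝ) (hG : ∀ A, G A = ∑ m ∈ A, g m)
    (A : Finset ι) (i j : ι) (hi : i ∉ A) (hj : j ∉ A) (hij : i ≠ j) :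
    F (insert i (insert j A)) * G (insert i (insert j A)) -
        F (insert j A) * G (insert j A) ≤
      F (insert i A) * G (insert i A) - F A * G A := by
  have hiA : i ∉ insert j A := by simp [hij, hi]
  have hRi : (0:ℝ) ≤ 1 / R i := le_of_lt (div_pos one_pos (hR i))
  have hRj : (0:ℝ) ≤ 1 / R j := le_of_lt (div_pos one_pos (hR j))
  simp only [hF, hG, Finset.sum_insert hiA, Finset.sum_insert hi, Finset.sum_insert hj]
  nlinarith [mul_nonneg hlam (mul_nonneg hRi (hg j)),
    mul_nonneg hlam (mul_nonneg hRj (hg i))]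
end

section
/- With F(A) = ω − λ∑_{m∈A} 1/R_m, G(A) = ∑_{m∈A} g_m (λ ≥ 0, R_m > 0, g_m ≥ 0, c > 0), the optimal-SNR set function γ̃(A) = c·F(A)·G(A) − 1 is submodular on subsets of the finite ground set. -/
/-- The optimal-SNR set function `γ̃(A) = c·F(A)·G(A) − 1` is submodular, where
`F(A) = ω − λ∑_{m∈A} 1/R_m` and `G(A) = ∑_{m∈A} g_m`. -/
theorem optSNR_submodular {ι : Type*} [Fintype ι] [DecidableEq ι]
    (ω lam c : ℝ) (hlam : 0 ≤ lam) (hc : 0 < c)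
    (R g : ι → ℝ) (hR : ∀ m, 0 < R m) (hg : ∀ m, 0 ≤ g m)
    (F : Finset ι → ℝ) (hF : ∀ A, F A = ω - lam * ∑ m ∈ A, 1 / R m)
    (G : Finset ι → ℝ) (hG : ∀ A, G A = ∑ m ∈ A, g m)
    (γ : Finset ι → ℝ) (hγ : ∀ A, γ A = c * F A * G A - 1)
    (A : Finset ι) (i j : ι) (hi : i ∉ A) (hj : j ∉ A) (hij : i ≠ j) :
    γ (insert i (insert j A)) - γ (insert j A) ≤ γ (insert i A) - γ A := by
  have hiA : i ∉ insert j A := by simp [hij, hi]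
  have hRi : 0 < 1 / R i := by have := hR i; have := hR j; positivity
  have hRj : 0 < 1 / R j := by have := hR i; have := hR j; positivity
  simp only [hγ, hF, hG, Finset.sum_insert hiA, Finset.sum_insert hj, Finset.sum_insert hi]
  nlinarith [mul_nonneg (mul_nonneg (mul_nonneg hc.le hlam) (hg i)) hRj.le,
    mul_nonneg (mul_nonneg (mul_nonneg hc.le hlam) (hg j)) hRi.le]
end

section
/- Let F > 0, c > 0, g_m > 0, μ_m > 0 for m = 1,…,M, and define G = ∑_m g_m/μ_m. Suppose c·F·G > 1. Then the power allocation p̃_m = (g_m/(μ_m² G²))·(c F G − 1) satisfies: the resulting SNR γ̃ = (∑_m √(g_m p̃_m))² equals c F G − 1, and p̃ is a stationary point of φ(p) = F·c·ln(1 + (∑_m √(g_m p_m))²) − ∑_m μ_m p_m (the first-order conditions ∂φ/∂p_m = 0 hold for all m). -/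
/-- The closed-form power allocation `p̃_m = (g_m/(μ_m² G²))·(cFG − 1)` yields
SNR `γ̃ = cFG − 1` and satisfies the first-order stationarity conditions of
`φ(p) = F·c·ln(1 + (∑ √(g_m p_m))²) − ∑ μ_m p_m`. -/
theorem optimal_power_allocation_stationary (M : ℕ) (F c : ℝ) (hF : 0 < F) (hc : 0 < c)
    (g μ : Fin M → ℝ) (hg : ∀ m, 0 < g m) (hμ : ∀ m, 0 < μ m)
    (G : ℝ) (hG : G = ∑ m, g m / μ m) (hcFG : 1 < c * F * G)
    (ptilde : Fin M → ℝ)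
    (hptilde : ∀ m, ptilde m = g m / (μ m ^ 2 * G ^ 2) * (c * F * G - 1))
    (φ : (Fin M → ℝ) → ℝ)
    (hφ : ∀ p, φ p = F * c * Real.log (1 + (∑ m, Real.sqrt (g m * p m)) ^ 2) -
        ∑ m, μ m * p m) :
    (∑ m, Real.sqrt (g m * ptilde m)) ^ 2 = c * F * G - 1 ∧
      ∀ m, HasDerivAt (fun x : ℝ => φ (Function.update ptilde m x)) 0 (ptilde m) := by
  have hG0 : 0 < G := by nlinarith [mul_pos hc hF]
  have ht1 : (0:ℝ) < c * F * G - 1 := by linarith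
  set t := Real.sqrt (c * F * G - 1) with htdef
  have ht2 : t ^ 2 = c * F * G - 1 := Real.sq_sqrt ht1.le
  have ht0 : 0 < t := Real.sqrt_pos.mpr ht1
  have hsq : ∀ k, Real.sqrt (g k * ptilde k) = g k / (μ k * G) * t := by
    intro k
    have h1 : g k * ptilde k = (g k / (μ k * G) * t) ^ 2 := by
      rw [hptilde, ← ht2]
      field_simp
    rw [h1, Real.sqrt_sq (le_of_lt (mul_pos (div_pos (hg k) (mul_pos (hμ k) hG0)) ht0))]
  have hsum : ∑ m, Real.sqrt (g m * ptilde m) = t := by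
    simp_rw [hsq]
    have : ∀ k : Fin M, g k / (μ k * G) * t = g k / μ k * (t / G) := by
      intro k; field_simp
    simp_rw [this, ← Finset.sum_mul, ← hG]
    field_simp
  refine ⟨by rw [hsum]; exact ht2, ?_⟩
  intro m
  have hp : 0 < ptilde m := by
    rw [hptilde]
    exact mul_pos (div_pos (hg m) (mul_pos (pow_pos (hμ m) 2) (pow_pos hG0 2))) ht1
  have hgp : 0 < g m * ptilde m := mul_pos (hg m) hp
  set S := ∑ k ∈ Finset.univ.erase m, Real.sqrt (g k * ptilde k) with hS
  set C := ∑ k ∈ Finset.univ.erase m, μ k * ptilde k with hC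
  have hsplit : ∀ (q : Fin M → ℝ) (f : Fin M → ℝ → ℝ),
      ∑ k, f k (Function.update ptilde m (q m) k)
        = (∑ k ∈ Finset.univ.erase m, f k (ptilde k)) + f m (q m) := by
    intro q f
    rw [← Finset.sum_erase_add _ _ (Finset.mem_univ m), Function.update_self]
    congr 1
    exact Finset.sum_congr rfl fun k hk => by
      rw [Function.update_of_ne (Finset.ne_of_mem_erase hk)]
  have funeq : ∀ x : ℝ, φ (Function.update ptilde m x)
      = F * c * Real.log (1 + (S + Real.sqrt (g m * x)) ^ 2) - (C + μ m * x) := by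
    intro x
    rw [hφ]
    have e1 : ∑ k, Real.sqrt (g k * Function.update ptilde m x k)
        = S + Real.sqrt (g m * x) :=
      hsplit (fun _ => x) (fun k y => Real.sqrt (g k * y))
    have e2 : ∑ k, μ k * Function.update ptilde m x k = C + μ m * x :=
      hsplit (fun _ => x) (fun k y => μ k * y)
    rw [e1, e2]
  have hSt : S + Real.sqrt (g m * ptilde m) = t := by
    rw [← hsum, ← Finset.sum_erase_add _ _ (Finset.mem_univ m)]
  have hd1 : HasDerivAt (fun x => Real.sqrt (g m * x))
      (g m / (2 * Real.sqrt (g m * ptilde m))) (ptilde m) := by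
    have h := (Real.hasDerivAt_sqrt (ne_of_gt hgp)).comp (ptilde m)
      ((hasDerivAt_id (ptilde m)).const_mul (g m))
    rw [show g m / (2 * Real.sqrt (g m * ptilde m)) = 1 / (2 * Real.sqrt (g m * ptilde m)) * (g m * 1) by ring]
    exact h
  have hd2 : HasDerivAt (fun x => 1 + (S + Real.sqrt (g m * x)) ^ 2)
      (2 * (S + Real.sqrt (g m * ptilde m)) ^ 1 * (g m / (2 * Real.sqrt (g m * ptilde m))))
      (ptilde m) := ((hd1.const_add S).pow 2).const_add 1
  have hpos : (0:ℝ) < 1 + (S + Real.sqrt (g m * ptilde m)) ^ 2 := by positivity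
  have hd3 := (hd2.log hpos.ne').const_mul (F * c)
  have hd4 : HasDerivAt (fun x : ℝ => C + μ m * x) (μ m * 1) (ptilde m) :=
    ((hasDerivAt_id (ptilde m)).const_mul (μ m)).const_add C
  have hd5 := hd3.sub hd4
  have hDeq : F * c * (2 * (S + Real.sqrt (g m * ptilde m)) ^ 1 *
      (g m / (2 * Real.sqrt (g m * ptilde m))) /
      (1 + (S + Real.sqrt (g m * ptilde m)) ^ 2)) - μ m * 1 = 0 := by
    rw [hSt, hsq m, ht2]
    have hμm := hμ m
    have hgm := hg m
    field_simp
    ring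
  have : (fun x : ℝ => φ (Function.update ptilde m x))
      = fun x => F * c * Real.log (1 + (S + Real.sqrt (g m * x)) ^ 2) - (C + μ m * x) :=
    funext funeq
  rw [this]
  rw [← hDeq]
  exact hd5
end

section
/- Let γ(p) = (∑_{m=1}^M √(g_m p_m))² with g_m ≥ 0. Then for any p, q in the nonnegative orthant and θ ∈ [0,1], log(1 + γ(θp + (1−θ)q)) ≥ θ·log(1 + γ(p)) + (1−θ)·log(1 + γ(q)). -/
private lemma cs_aux (θ : ℝ) (hθ0 : 0 ≤ θ) (hθ1 : θ ≤ 1)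
    (a b c a' b' c' : ℝ) (ha : 0 ≤ a) (hb : 0 ≤ b) (ha' : 0 ≤ a') (hb' : 0 ≤ b')
    (hc : 0 ≤ c) (hc' : 0 ≤ c')
    (h1 : c ^ 2 = θ * a ^ 2 + (1 - θ) * b ^ 2)
    (h2 : c' ^ 2 = θ * a' ^ 2 + (1 - θ) * b' ^ 2) :
    θ * (a * a') + (1 - θ) * (b * b') ≤ c * c' := by
  have key : (θ * (a * a') + (1 - θ) * (b * b')) ^ 2 ≤ (c * c') ^ 2 := by
    have h := sq_nonneg (a * b' - a' * b)
    nlinarith [mul_nonneg hθ0 (sub_nonneg.mpr hθ1), mul_nonneg (mul_nonneg ha ha') (mul_nonneg hb hb')]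
  have hnn : 0 ≤ θ * (a * a') + (1 - θ) * (b * b') := by
    have := mul_nonneg ha ha'
    have := mul_nonneg hb hb'
    nlinarith
  nlinarith [mul_nonneg hc hc']

/-- Joint concavity of the rate `log(1 + γ(p))` with `γ(p) = (∑ √(g_m p_m))²`,
stated directly as a concavity inequality on the nonnegative orthant. -/
theorem log_one_add_snr_concave (M : ℕ) (g : Fin M → ℝ) (hg : ∀ m, 0 ≤ g m)
    (p q : Fin M → ℝ) (hp : ∀ m, 0 ≤ p m) (hq : ∀ m, 0 ≤ q m)
    (θ : ℝ) (hθ0 : 0 ≤ θ) (hθ1 : θ ≤ 1) :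
    θ * Real.log (1 + (∑ m, Real.sqrt (g m * p m)) ^ 2) +
        (1 - θ) * Real.log (1 + (∑ m, Real.sqrt (g m * q m)) ^ 2) ≤
      Real.log (1 + (∑ m, Real.sqrt (g m * (θ * p m + (1 - θ) * q m))) ^ 2) := by
  set a : Fin M → ℝ := fun m => Real.sqrt (g m * p m) with ha
  set b : Fin M → ℝ := fun m => Real.sqrt (g m * q m) with hb
  set c : Fin M → ℝ := fun m => Real.sqrt (g m * (θ * p m + (1 - θ) * q m)) with hc
  have hθ' : 0 ≤ 1 - θ := by linarith
  -- pointwise squares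
  have hsq : ∀ m, (c m) ^ 2 = θ * (a m) ^ 2 + (1 - θ) * (b m) ^ 2 := by
    intro m
    have hpm : 0 ≤ g m * p m := mul_nonneg (hg m) (hp m)
    have hqm : 0 ≤ g m * q m := mul_nonneg (hg m) (hq m)
    have hrm : 0 ≤ g m * (θ * p m + (1 - θ) * q m) := by
      have := mul_nonneg hθ0 (hp m); have := mul_nonneg hθ' (hq m)
      exact mul_nonneg (hg m) (by linarith)
    simp only [ha, hb, hc, Real.sq_sqrt hpm, Real.sq_sqrt hqm, Real.sq_sqrt hrm]
    ring
  -- γ is concave: (∑ c)² ≥ θ (∑ a)² + (1-θ)(∑ b)²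
  have hγ : θ * (∑ m, a m) ^ 2 + (1 - θ) * (∑ m, b m) ^ 2 ≤ (∑ m, c m) ^ 2 := by
    have expand : ∀ f : Fin M → ℝ, (∑ m, f m) ^ 2 = ∑ m, ∑ n, f m * f n := by
      intro f; rw [sq, Finset.sum_mul_sum]
    rw [expand a, expand b, expand c, Finset.mul_sum, Finset.mul_sum, ← Finset.sum_add_distrib]
    refine Finset.sum_le_sum fun m _ => ?_
    rw [Finset.mul_sum, Finset.mul_sum, ← Finset.sum_add_distrib]
    refine Finset.sum_le_sum fun n _ => ?_
    exact cs_aux θ hθ0 hθ1 (a m) (b m) (c m) (a n) (b n) (c n)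
      (Real.sqrt_nonneg _) (Real.sqrt_nonneg _) (Real.sqrt_nonneg _) (Real.sqrt_nonneg _)
      (Real.sqrt_nonneg _) (Real.sqrt_nonneg _) (hsq m) (hsq n)
  -- positivity
  have hA : (0:ℝ) < 1 + (∑ m, a m) ^ 2 := by positivity
  have hB : (0:ℝ) < 1 + (∑ m, b m) ^ 2 := by positivity
  -- concavity of log
  have hlog : θ * Real.log (1 + (∑ m, a m) ^ 2) + (1 - θ) * Real.log (1 + (∑ m, b m) ^ 2)
      ≤ Real.log (θ * (1 + (∑ m, a m) ^ 2) + (1 - θ) * (1 + (∑ m, b m) ^ 2)) := by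
    have := (strictConcaveOn_log_Ioi.concaveOn).2 (Set.mem_Ioi.mpr hA) (Set.mem_Ioi.mpr hB)
      hθ0 hθ' (by ring)
    simpa using this
  refine hlog.trans (Real.log_le_log (by nlinarith) ?_)
  nlinarith
end
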